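/- arXiv:0901.3689 — 4 statements merged into one kernel-verified Lean document; each statement's English description precedes it below -/
import Mathlib

section
/- Let M be a free ℛ-module of finite rank n and let φ : M → M be an injective σ-semilinear map with φ(M) = M. Then the set of fixed points M^φ = {m ∈ M : φ(m) = m} is a free R-module of rank n, and the natural ℛ-linear map ℛ ⊗_R M^φ → M, a ⊗ m ↦ a·m, is an isomorphism; in particular M admits an ℛ-basis consisting of φ-fixed elements. -/
/- STATEMENT 0: Let M be a free ℛ-module of finite rank n and φ : M → M an injective
σ-semilinear map with φ(M) = M. Then M^φ = {m : φ(m) = m} is a free R-module of rank n, the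
natural map ℛ ⊗_R M^φ → M, a ⊗ m ↦ a·m, is an isomorphism, and in particular M has an
ℛ-basis of φ-fixed elements. Here ℛ = k⟦π⟧, σ is the coefficientwise q-Frobenius, and
R = {a ∈ ℛ : σ(a) = a}. -/

noncomputable section

open scoped TensorProduct

set_option maxHeartbeats 1000000
set_option synthInstance.maxHeartbeats 1000000

namespace ExcDES

variable {k : Type*} [Field k]

/-- The fixed subring `R = K ∩ ℛ = {a ∈ ℛ : σ(a) = a}` of `σ` acting on `ℛ = k⟦π⟧`. -/
def fixedSubringP (σ : PowerSeries k ≃+* PowerSeries k) : Subring (PowerSeries k) where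
  carrier := {a | σ a = a}
  mul_mem' := by intro a b (ha : σ a = a) (hb : σ b = b); show σ (a * b) = a * b
                 rw [map_mul, ha, hb]
  one_mem' := map_one σ
  add_mem' := by intro a b (ha : σ a = a) (hb : σ b = b); show σ (a + b) = a + b
                 rw [map_add, ha, hb]
  zero_mem' := map_zero σ
  neg_mem' := by intro a (ha : σ a = a); show σ (-a) = -a; rw [map_neg, ha]

lemma addhom_zero {M N : Type*} [AddCommGroup M] [AddCommGroup N] (φ : M → N)
    (hadd : ∀ x y, φ (x + y) = φ x + φ y) : φ 0 = 0 := by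
  have h := hadd 0 0
  rw [add_zero] at h
  exact (left_eq_add.mp h)

/-- The `R`-submodule `M^φ` of `φ`-fixed points of `M`. -/
def fixedSubmodule (σ : PowerSeries k ≃+* PowerSeries k)
    {M : Type*} [AddCommGroup M] [Module (PowerSeries k) M]
    (φ : M → M) (hadd : ∀ x y, φ (x + y) = φ x + φ y)
    (hsmul : ∀ (a : PowerSeries k) (m : M), φ (a • m) = σ a • φ m) :
    Submodule (fixedSubringP σ) M where
  carrier := {m | φ m = m}
  add_mem' := by intro a b (ha : φ a = a) (hb : φ b = b); show φ (a + b) = a + b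
                 rw [hadd, ha, hb]
  zero_mem' := addhom_zero φ hadd
  smul_mem' := by
    intro c m (hm : φ m = m)
    have hc : σ (c : PowerSeries k) = (c : PowerSeries k) := c.2
    show φ ((c : PowerSeries k) • m) = (c : PowerSeries k) • m
    rw [hsmul, hc, hm]

end ExcDES

/-!
Over the algebraically closed field `k`, an injective `q`-Frobenius-semilinear endomorphism `ψ`
of a finite-dimensional space has a basis of fixed vectors (Lang). A nonzero fixed vector exists
because on a cyclic subspace `⟨v, ψ v, …, ψ^s v⟩` being fixed is one polynomial equation in the
last coordinate; and the fixed vectors span, since an Artin–Schreier equation `b - b ^ q = a`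
corrects a lift of a fixed vector of the quotient by their span into a fixed vector.

Over `k⟦π⟧`, let `C` be the matrix of `φ` in a basis; it is invertible because `φ` is onto.
A basis of fixed vectors is an invertible matrix `U` with `C σ(U) = U`. Its constant term is given
by Lang's theorem for `C mod π`, and every further coefficient solves `X - C₀ σ(X) = B`, which
Artin–Schreier makes solvable. The fixed basis is then an `R`-basis of `M^φ`, and
`ℛ ⊗_R M^φ → M` maps the base-changed basis to it.
-/

section ArtinSchreier

open Polynomial

variable {k : Type*} [Field k] [IsAlgClosed k]

theorem exists_sub_pow_eq {q : ℕ} (hq : 1 < q) (a : k) : ∃ b : k, b - b ^ q = a := by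
  have hdeg : (X ^ q - X + C a : k[X]).degree ≠ 0 := fun h => by
    have : _ = 0 := natDegree_eq_of_degree_eq_some h
    rw [natDegree_add_C, FiniteField.X_pow_card_sub_X_natDegree_eq k hq] at this
    omega
  obtain ⟨b, hb⟩ := IsAlgClosed.exists_root _ hdeg
  refine ⟨b, ?_⟩
  simp only [IsRoot, eval_add, eval_sub, eval_pow, eval_X, eval_C] at hb
  linear_combination -hb

theorem exists_ne_zero_eval_eq_self {f : k[X]} (hf : f ≠ 0) (hdvd : X ^ 2 ∣ f) :
    ∃ t ≠ 0, f.eval t = t := by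
  obtain ⟨g, rfl⟩ := hdvd
  have hg : g ≠ 0 := right_ne_zero_of_mul hf
  have hdeg : (X * g - C 1).degree ≠ 0 := fun h => by
    have : _ = 0 := natDegree_eq_of_degree_eq_some h
    rw [natDegree_sub_C, natDegree_X_mul hg] at this
    omega
  obtain ⟨t, ht⟩ := IsAlgClosed.exists_root _ hdeg
  simp only [IsRoot, eval_sub, eval_mul, eval_X, eval_C, sub_eq_zero] at ht
  refine ⟨t, left_ne_zero_of_mul_eq_one ht, ?_⟩
  simp only [eval_mul, eval_pow, eval_X]
  linear_combination t * ht

end ArtinSchreier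

section CyclicFixedPoly

open Polynomial

variable {k : Type*} [Field k]

/-- If `w (s + 1) = ∑ i ≤ s, c i • w i` with `w (i + 1) = ψ (w i)`, then `∑ i ≤ s, y i • w i` is
`ψ`-fixed iff `y 0 = c 0 * y s ^ q` and `y (i + 1) = y i ^ q + c (i + 1) * y s ^ q`; the `i`-th
polynomial gives `y i` as a function of `t = y s`, so a fixed vector is a root of
`cyclicFixedPoly q c s - X`. -/
def cyclicFixedPoly (q : ℕ) (c : ℕ → k) : ℕ → k[X]
  | 0 => C (c 0) * X ^ q
  | i + 1 => cyclicFixedPoly q c i ^ q + C (c (i + 1)) * X ^ q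

variable {q : ℕ} (hq : 1 < q) (c : ℕ → k)
include hq

theorem X_sq_dvd_cyclicFixedPoly (i : ℕ) : X ^ 2 ∣ cyclicFixedPoly q c i := by
  have hXq : (X : k[X]) ^ 2 ∣ X ^ q := pow_dvd_pow X hq
  induction i with
  | zero => exact hXq.mul_left _
  | succ i ih => exact (dvd_pow ih (by omega)).add (hXq.mul_left _)

theorem coeff_cyclicFixedPoly (i : ℕ) : (cyclicFixedPoly q c i).coeff q = c i := by
  cases i with
  | zero => simp [cyclicFixedPoly]
  | succ i =>
    obtain ⟨g, hg⟩ := pow_dvd_pow_of_dvd (X_sq_dvd_cyclicFixedPoly hq c i) q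
    rw [← pow_mul] at hg
    simp [cyclicFixedPoly, hg, coeff_X_pow_mul']
    omega

theorem cyclicFixedPoly_succ_ne_zero {i : ℕ} (hi : cyclicFixedPoly q c i ≠ 0) :
    cyclicFixedPoly q c (i + 1) ≠ 0 := by
  have h2 : 2 ≤ (cyclicFixedPoly q c i).natDegree := by
    simpa using natDegree_le_of_dvd (X_sq_dvd_cyclicFixedPoly hq c i) hi
  have hlt : (C (c (i + 1)) * X ^ q).natDegree < (cyclicFixedPoly q c i ^ q).natDegree := by
    rw [natDegree_pow]
    calc (C (c (i + 1)) * X ^ q).natDegree ≤ q := natDegree_C_mul_X_pow_le _ _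
      _ < q * (cyclicFixedPoly q c i).natDegree := by nlinarith
  rw [cyclicFixedPoly]
  exact ne_zero_of_natDegree_gt (n := 0) <| by
    rw [natDegree_add_eq_left_of_natDegree_lt hlt]
    omega

theorem cyclicFixedPoly_ne_zero {j s : ℕ} (hjs : j ≤ s) (hj : c j ≠ 0) :
    cyclicFixedPoly q c s ≠ 0 := by
  induction s, hjs using Nat.le_induction with
  | base => exact fun h => hj (by rw [← coeff_cyclicFixedPoly hq c j, h, coeff_zero])
  | succ s _ ih => exact cyclicFixedPoly_succ_ne_zero hq c ih

end CyclicFixedPoly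

section Lang

open Finset Module

variable {k : Type*} [Field k] {V : Type*} [AddCommGroup V] [Module k V]

theorem exists_linearIndependent_and_eq_sum [FiniteDimensional k V] (w : ℕ → V) (hw : w 0 ≠ 0) :
    ∃ s, LinearIndependent k (fun i : Fin (s + 1) => w i) ∧
      ∃ c : ℕ → k, w (s + 1) = ∑ i ∈ range (s + 1), c i • w i := by
  classical
  have hex : ∃ m, ¬ LinearIndependent k (fun i : Fin m => w i) :=
    ⟨finrank k V + 1, fun h => by simpa using h.fintype_card_le_finrank⟩
  obtain ⟨s, hs⟩ : ∃ s, Nat.find hex = s + 2 := by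
    refine ⟨Nat.find hex - 2, ?_⟩
    have h0 : Nat.find hex ≠ 0 := fun h => Nat.find_spec hex (h ▸ linearIndependent_empty_type)
    have h1 : Nat.find hex ≠ 1 := fun h =>
      Nat.find_spec hex (h ▸ linearIndependent_unique_iff.mpr hw)
    omega
  have hli : LinearIndependent k (fun i : Fin (s + 1) => w i) :=
    not_not.mp (Nat.find_min hex (by omega))
  have hdep := hs ▸ Nat.find_spec hex
  rw [linearIndependent_finSucc', not_and_not_right] at hdep
  obtain ⟨c, hc⟩ := (Submodule.mem_span_range_iff_exists_fun k).mp (hdep hli)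
  refine ⟨s, hli, fun i => if h : i < s + 1 then c ⟨i, h⟩ else 0, ?_⟩
  rw [show w (s + 1) = w ↑(Fin.last (s + 1)) from rfl, ← hc, sum_fin_eq_sum_range]
  refine sum_congr rfl fun i hi => ?_
  simp only [dif_pos (mem_range.mp hi)]
  rfl

variable [IsAlgClosed k] {q : ℕ} (hq : 1 < q) {σ₀ : k →+* k} (hσ₀ : ∀ x, σ₀ x = x ^ q)
include hq hσ₀

theorem LinearMap.exists_ne_zero_apply_eq_self [FiniteDimensional k V] [Nontrivial V]
    {ψ : V →ₛₗ[σ₀] V} (hψ : Function.Injective ψ) : ∃ x ≠ 0, ψ x = x := by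
  obtain ⟨v, hv⟩ := exists_ne (0 : V)
  set w : ℕ → V := fun i => ψ^[i] v
  have hw : ∀ i, w (i + 1) = ψ (w i) := fun i => Function.iterate_succ_apply' ψ i v
  obtain ⟨s, hli, c, hc⟩ := exists_linearIndependent_and_eq_sum (k := k) w hv
  have hc0 : ∃ j ≤ s, c j ≠ 0 := by
    by_contra! h
    have hw0 : w (s + 1) = 0 := hc.trans <| sum_eq_zero fun i hi => by
      rw [h i (Nat.lt_succ_iff.mp (Finset.mem_range.mp hi)), zero_smul]
    exact (hψ.iterate (s + 1)).ne hv (hw0.trans (Function.iterate_fixed (map_zero ψ) _).symm)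
  obtain ⟨j, hjs, hj⟩ := hc0
  obtain ⟨t, ht0, ht⟩ := exists_ne_zero_eval_eq_self
    (cyclicFixedPoly_ne_zero hq c hjs hj) (X_sq_dvd_cyclicFixedPoly hq c s)
  set y : ℕ → k := fun i => (cyclicFixedPoly q c i).eval t
  have hy0 : y 0 = t ^ q * c 0 := by simp [y, cyclicFixedPoly]; ring
  have hy : ∀ i, y (i + 1) = y i ^ q + t ^ q * c (i + 1) := fun i => by
    simp [y, cyclicFixedPoly]; ring
  refine ⟨∑ i ∈ Finset.range (s + 1), y i • w i, fun h0 => ht0 ?_, ?_⟩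
  · have := Fintype.linearIndependent_iff.mp hli (fun i => y i)
      (by rwa [Fin.sum_univ_eq_sum_range (fun i => y i • w i)]) (Fin.last s)
    simpa [y, ht] using this
  · have hψx : ψ (∑ i ∈ Finset.range (s + 1), y i • w i) =
        ∑ i ∈ Finset.range (s + 1), y i ^ q • w (i + 1) := by
      simp [map_sum, hσ₀, hw]
    rw [hψx, sum_range_succ, hc, sum_range_succ', sum_range_succ' (fun i => y i • w i)]
    simp only [hy, hy0, show y s = t from ht, add_smul, smul_add, sum_add_distrib, smul_sum,
      smul_smul]
    abel

theorem LinearMap.span_fixedPoints_eq_top [FiniteDimensional k V] {ψ : V →ₛₗ[σ₀] V}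
    (hψ : Function.Injective ψ) : Submodule.span k {x | ψ x = x} = ⊤ := by
  set W := Submodule.span k {x | ψ x = x}
  have : RingHomSurjective σ₀ := ⟨fun a => by
    obtain ⟨b, hb⟩ := IsAlgClosed.exists_pow_nat_eq a (zero_lt_one.trans hq)
    exact ⟨b, by rw [hσ₀, hb]⟩⟩
  have hWψ : W ≤ W.comap ψ := Submodule.span_le.mpr fun x (hx : ψ x = x) => by
    change ψ x ∈ W
    rw [hx]
    exact Submodule.subset_span hx
  have hψW : W ≤ W.map ψ := Submodule.span_le.mpr fun x (hx : ψ x = x) =>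
    ⟨x, Submodule.subset_span hx, hx⟩
  have hAS : ∀ u ∈ W, ∃ w ∈ W, w - ψ w = u := by
    intro u hu
    obtain ⟨n, a, x, rfl⟩ := Submodule.mem_span_set'.mp hu
    choose g hg using fun i => exists_sub_pow_eq hq (a i)
    refine ⟨∑ i, g i • (x i : V),
      W.sum_mem fun i _ => W.smul_mem _ (Submodule.subset_span (x i).2), ?_⟩
    simp [map_sum, hσ₀, (x _).2.out, ← sum_sub_distrib, ← sub_smul, hg]
  by_contra hW
  have : Nontrivial (V ⧸ W) := Submodule.Quotient.nontrivial_iff.mpr hW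
  have hψ' : Function.Injective (W.mapQ W ψ hWψ) := by
    refine (injective_iff_map_eq_zero _).mpr fun z' hz' => ?_
    obtain ⟨z, rfl⟩ := W.mkQ_surjective z'
    obtain ⟨w, hw, hwz⟩ := hψW ((Submodule.Quotient.mk_eq_zero W).mp hz')
    rw [Submodule.mkQ_apply, Submodule.Quotient.mk_eq_zero, ← hψ hwz]
    exact hw
  obtain ⟨z', hz'0, hz'⟩ := LinearMap.exists_ne_zero_apply_eq_self hq hσ₀ hψ'
  obtain ⟨z, rfl⟩ := W.mkQ_surjective z'
  obtain ⟨w, hw, hwz⟩ := hAS (ψ z - z) ((Submodule.Quotient.eq W).mp hz')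
  have hfix : ψ (z + w) = z + w := by
    rw [map_add]
    linear_combination (norm := module) -hwz
  refine hz'0 ((Submodule.Quotient.mk_eq_zero W).mpr ?_)
  simpa using W.sub_mem (Submodule.subset_span hfix) hw

theorem LinearMap.exists_basis_apply_eq_self [FiniteDimensional k V] {ι : Type*}
    (e : Basis ι k V) {ψ : V →ₛₗ[σ₀] V} (hψ : Function.Injective ψ) :
    ∃ b : Basis ι k V, ∀ i, ψ (b i) = b i := by
  obtain ⟨s, hs, hspan, hli⟩ := exists_linearIndependent k {x | ψ x = x}
  let b := Basis.mk hli (by rw [Subtype.range_val, hspan, span_fixedPoints_eq_top hq hσ₀ hψ])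
  exact ⟨b.reindex (b.indexEquiv e), fun i => by simpa [b] using hs (Subtype.prop _)⟩

open Matrix

variable {ι : Type*} [Fintype ι] [DecidableEq ι]

theorem Matrix.exists_isUnit_det_mul_map_eq {C : Matrix ι ι k} (hC : IsUnit C.det) :
    ∃ U : Matrix ι ι k, IsUnit U.det ∧ C * U.map σ₀ = U := by
  let ψ : (ι → k) →ₛₗ[σ₀] (ι → k) :=
    { toFun := fun x => C *ᵥ (σ₀ ∘ x)
      map_add' := fun x y => by ext; simp [mulVec, dotProduct, mul_add, sum_add_distrib]
      map_smul' := fun a x => by ext; simp [mulVec, dotProduct, mul_sum, mul_left_comm] }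
  have hψ : Function.Injective ψ :=
    (mulVec_injective_iff_isUnit.mpr ((C.isUnit_iff_isUnit_det).mpr hC)).comp
      σ₀.injective.comp_left
  obtain ⟨b, hb⟩ := LinearMap.exists_basis_apply_eq_self hq hσ₀ (Pi.basisFun k ι) hψ
  refine ⟨(Pi.basisFun k ι).toMatrix b, (Pi.basisFun k ι).isUnit_det b, ?_⟩
  ext r i
  simpa [ψ, Basis.toMatrix_apply, mul_apply, mulVec, dotProduct] using congrFun (hb i) r

theorem Matrix.exists_sub_mul_map_eq {C U₀ : Matrix ι ι k} (hU₀ : IsUnit U₀.det)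
    (hCU₀ : C * U₀.map σ₀ = U₀) (B : Matrix ι ι k) : ∃ X, X - C * X.map σ₀ = B := by
  choose g hg using fun a : k => exists_sub_pow_eq hq a
  refine ⟨U₀ * (U₀⁻¹ * B).map g, ?_⟩
  have hY : (U₀⁻¹ * B).map g - ((U₀⁻¹ * B).map g).map σ₀ = U₀⁻¹ * B := by
    ext; simp [hσ₀, hg]
  rw [Matrix.map_mul, ← Matrix.mul_assoc, hCU₀, ← Matrix.mul_sub, hY, ← Matrix.mul_assoc,
    mul_nonsing_inv _ hU₀, Matrix.one_mul]

end Lang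

section SemilinearBasis

open Module Matrix

variable {R : Type*} [CommRing R] {σ : R →+* R} {M : Type*} [AddCommGroup M] [Module R M]
  {ι : Type*} [Fintype ι] (b : Basis ι R M)

theorem Module.Basis.equivFun_semilinearMap_apply (φ : M →ₛₗ[σ] M) (x : M) :
    b.equivFun (φ x) = b.toMatrix (φ ∘ b) *ᵥ (σ ∘ b.equivFun x) := by
  ext i
  conv_lhs => rw [← b.sum_repr x, map_sum]
  simp [Basis.toMatrix_apply, mulVec, dotProduct, mul_comm]

variable [DecidableEq ι] {φ : M →ₛₗ[σ] M}

theorem Module.Basis.isUnit_det_toMatrix_of_surjective (hφ : Function.Surjective φ) :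
    IsUnit (b.toMatrix (φ ∘ b)).det := by
  rw [← isUnit_iff_isUnit_det, ← mulVec_surjective_iff_isUnit]
  intro y
  obtain ⟨x, hx⟩ := hφ (b.equivFun.symm y)
  exact ⟨_, by rw [← b.equivFun_semilinearMap_apply, hx, LinearEquiv.apply_symm_apply]⟩

theorem Module.Basis.exists_basis_apply_eq_self_of_mul_map_eq {U : Matrix ι ι R}
    (hU : IsUnit U.det) (hφU : b.toMatrix (φ ∘ b) * U.map σ = U) :
    ∃ b' : Basis ι R M, ∀ i, φ (b' i) = b' i := by
  set v : ι → M := fun i => b.equivFun.symm (fun r => U r i)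
  have hv : b.toMatrix v = U := by
    ext i j
    rw [Basis.toMatrix_apply, ← b.equivFun_apply, LinearEquiv.apply_symm_apply]
  obtain ⟨hli, hspan⟩ := (b.is_basis_iff_det).mpr (by rwa [Basis.det_apply, hv])
  refine ⟨Basis.mk hli hspan.ge, fun i => b.equivFun.injective ?_⟩
  rw [Basis.mk_apply, b.equivFun_semilinearMap_apply]
  ext r
  simp only [v, LinearEquiv.apply_symm_apply]
  conv_rhs => rw [← hφU]
  simp [Matrix.mul_apply, mulVec, dotProduct]

end SemilinearBasis

section PowerSeriesLift

open Finset Matrix PowerSeries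

variable {k : Type*} [CommRing k] {ι : Type*} [Fintype ι]

theorem Matrix.map_coeff_mul (A B : Matrix ι ι k⟦X⟧) (m : ℕ) :
    (A * B).map (coeff m) = ∑ p ∈ antidiagonal m, A.map (coeff p.1) * B.map (coeff p.2) := by
  ext i j
  simp [Matrix.mul_apply, coeff_mul, Matrix.sum_apply]
  exact sum_comm

/-- Coefficient `m` of `C * U.map σ = U` reads `Uₘ - C₀ σ₀(Uₘ) = ∑ j < m, Cₘ₋ⱼ σ₀(Uⱼ)`;
with `g` a right inverse of `Y ↦ Y - C₀ σ₀(Y)` this determines `Uₘ` from the earlier ones. -/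
def liftCoeffs (σ₀ : k →+* k) (C : Matrix ι ι k⟦X⟧) (U₀ : Matrix ι ι k)
    (g : Matrix ι ι k → Matrix ι ι k) : ℕ → Matrix ι ι k
  | 0 => U₀
  | m + 1 => g (∑ j : Fin (m + 1), C.map (coeff (m + 1 - j)) * (liftCoeffs σ₀ C U₀ g j).map σ₀)

theorem sum_antidiagonal_liftCoeffs {σ₀ : k →+* k} {C : Matrix ι ι k⟦X⟧} {U₀ : Matrix ι ι k}
    {g : Matrix ι ι k → Matrix ι ι k} (hU₀ : C.map (coeff 0) * U₀.map σ₀ = U₀)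
    (hg : ∀ B, g B - C.map (coeff 0) * (g B).map σ₀ = B) (m : ℕ) :
    ∑ p ∈ antidiagonal m, C.map (coeff p.1) * (liftCoeffs σ₀ C U₀ g p.2).map σ₀ =
      liftCoeffs σ₀ C U₀ g m := by
  cases m with
  | zero => simpa [liftCoeffs] using hU₀
  | succ m =>
    have hS : ∑ p ∈ antidiagonal m, C.map (coeff (p.1 + 1)) * (liftCoeffs σ₀ C U₀ g p.2).map σ₀ =
        ∑ j : Fin (m + 1), C.map (coeff (m + 1 - j)) * (liftCoeffs σ₀ C U₀ g j).map σ₀ := by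
      rw [← Nat.sum_antidiagonal_swap, Nat.sum_antidiagonal_eq_sum_range_succ_mk,
        ← Fin.sum_univ_eq_sum_range]
      refine sum_congr rfl fun j _ => ?_
      simp only [Prod.swap_prod_mk]
      rw [show m - j + 1 = m + 1 - j by omega]
    rw [Nat.sum_antidiagonal_succ, hS, liftCoeffs]
    exact eq_sub_iff_add_eq'.mp (hg _).symm

theorem Matrix.exists_isUnit_det_mul_map_eq_of_constantCoeff [DecidableEq ι] {σ₀ : k →+* k}
    {σ : k⟦X⟧ →+* k⟦X⟧} (hσ : ∀ f m, coeff m (σ f) = σ₀ (coeff m f)) {C : Matrix ι ι k⟦X⟧}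
    {U₀ : Matrix ι ι k} (hU₀ : IsUnit U₀.det) (hCU₀ : C.map (coeff 0) * U₀.map σ₀ = U₀)
    (hsolve : ∀ B, ∃ Y, Y - C.map (coeff 0) * Y.map σ₀ = B) :
    ∃ U : Matrix ι ι k⟦X⟧, IsUnit U.det ∧ C * U.map σ = U := by
  choose g hg using hsolve
  set U : Matrix ι ι k⟦X⟧ := Matrix.of fun r c => mk fun m => liftCoeffs σ₀ C U₀ g m r c
  have hU : ∀ m, U.map (coeff m) = liftCoeffs σ₀ C U₀ g m := fun m => by ext; simp [U]
  have hσU : ∀ m, (U.map σ).map (coeff m) = (liftCoeffs σ₀ C U₀ g m).map σ₀ := fun m => by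
    ext; simp [U, hσ]
  refine ⟨U, ?_, ?_⟩
  · rwa [isUnit_iff_constantCoeff, RingHom.map_det, RingHom.mapMatrix_apply,
      ← coeff_zero_eq_constantCoeff, hU, liftCoeffs]
  · ext r c m
    change (C * U.map σ).map (coeff m) r c = U.map (coeff m) r c
    rw [Matrix.map_coeff_mul, hU]
    simp only [hσU, sum_antidiagonal_liftCoeffs hCU₀ hg]

end PowerSeriesLift

section LangPowerSeries

open Matrix PowerSeries

variable {k : Type*} [Field k] [IsAlgClosed k] {q : ℕ} (hq : 1 < q) {σ₀ : k →+* k}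
  (hσ₀ : ∀ x, σ₀ x = x ^ q) {σ : k⟦X⟧ →+* k⟦X⟧} (hσ : ∀ f m, coeff m (σ f) = σ₀ (coeff m f))
include hq hσ₀ hσ

theorem Matrix.exists_isUnit_det_mul_map_eq_powerSeries {ι : Type*} [Fintype ι] [DecidableEq ι]
    {C : Matrix ι ι k⟦X⟧} (hC : IsUnit C.det) :
    ∃ U : Matrix ι ι k⟦X⟧, IsUnit U.det ∧ C * U.map σ = U := by
  have hC₀ : IsUnit (C.map (coeff 0)).det := by
    rw [coeff_zero_eq_constantCoeff, ← RingHom.mapMatrix_apply, ← RingHom.map_det]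
    exact hC.map _
  obtain ⟨U₀, hU₀, hCU₀⟩ := exists_isUnit_det_mul_map_eq hq hσ₀ hC₀
  exact exists_isUnit_det_mul_map_eq_of_constantCoeff hσ hU₀ hCU₀
    (exists_sub_mul_map_eq hq hσ₀ hU₀ hCU₀)

theorem Module.Basis.exists_basis_apply_eq_self_of_surjective {M : Type*} [AddCommGroup M]
    [Module k⟦X⟧ M] {ι : Type*} [Fintype ι] [DecidableEq ι] (b : Basis ι k⟦X⟧ M)
    {φ : M →ₛₗ[σ] M} (hφ : Function.Surjective φ) :
    ∃ b' : Basis ι k⟦X⟧ M, ∀ i, φ (b' i) = b' i := by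
  obtain ⟨U, hU, hCU⟩ :=
    exists_isUnit_det_mul_map_eq_powerSeries hq hσ₀ hσ (b.isUnit_det_toMatrix_of_surjective hφ)
  exact b.exists_basis_apply_eq_self_of_mul_map_eq hU hCU

end LangPowerSeries

section FixedSubmodule

open Module PowerSeries ExcDES

variable {k : Type*} [Field k] {σ : k⟦X⟧ ≃+* k⟦X⟧} {M : Type*} [AddCommGroup M] [Module k⟦X⟧ M]
  {ι : Type*} [Fintype ι] (φ : M →ₛₗ[(σ : k⟦X⟧ →+* k⟦X⟧)] M) {b : Basis ι k⟦X⟧ M}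
  (hb : ∀ i, φ (b i) = b i)
include hb

theorem apply_eq_self_iff_forall_repr_fixed {x : M} :
    φ x = x ↔ ∀ i, σ (b.repr x i) = b.repr x i := by
  have hφx : φ x = ∑ i, σ (b.repr x i) • b i := by
    conv_lhs => rw [← b.sum_repr x, map_sum]
    simp [hb]
  simp only [hφx, b.ext_elem_iff, b.repr_sum_self]

def fixedBasis :
    Basis ι (fixedSubringP σ) (fixedSubmodule σ φ φ.map_add φ.map_smulₛₗ) :=
  Basis.mk (v := fun i => ⟨b i, hb i⟩)
    (LinearIndependent.of_comp (fixedSubmodule σ φ φ.map_add φ.map_smulₛₗ).subtype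
      (b.linearIndependent.restrict_scalars' (fixedSubringP σ)))
    (by
      rintro ⟨x, hx⟩ -
      have hcoeff := (apply_eq_self_iff_forall_repr_fixed φ hb).mp hx
      refine (Submodule.mem_span_range_iff_exists_fun _).mpr ⟨fun i => ⟨b.repr x i, hcoeff i⟩, ?_⟩
      ext
      simp [Subring.smul_def, b.sum_repr])

@[simp]
theorem coe_fixedBasis (i : ι) : (fixedBasis φ hb i : M) = b i := by
  simp [fixedBasis]

theorem bijective_liftBaseChange_subtype_fixedSubmodule :
    Function.Bijective (LinearMap.liftBaseChange k⟦X⟧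
      (fixedSubmodule σ φ φ.map_add φ.map_smulₛₗ).subtype) := by
  have hbase : LinearMap.liftBaseChange k⟦X⟧ (fixedSubmodule σ φ φ.map_add φ.map_smulₛₗ).subtype =
      ((fixedBasis φ hb).baseChange k⟦X⟧).equiv b (Equiv.refl ι) :=
    ((fixedBasis φ hb).baseChange k⟦X⟧).ext fun i => by
      rw [LinearEquiv.coe_coe, Basis.equiv_apply]
      simp
  rw [hbase]
  exact LinearEquiv.bijective _

end FixedSubmodule

open ExcDES in
theorem etale_fixed_points_free_and_basechange_general
    (p e : ℕ) [Fact p.Prime] (he : 0 < e)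
    (k : Type*) [Field k] [IsAlgClosed k]
    (σ : PowerSeries k ≃+* PowerSeries k)
    (hσ : ∀ (f : PowerSeries k) (n : ℕ),
      PowerSeries.coeff n (σ f) = PowerSeries.coeff n f ^ p ^ e)
    (M : Type*) [AddCommGroup M] [Module (PowerSeries k) M]
    (n : ℕ) (bM : Module.Basis (Fin n) (PowerSeries k) M)
    (φ : M → M)
    (hadd : ∀ x y, φ (x + y) = φ x + φ y)
    (hsmul : ∀ (a : PowerSeries k) (m : M), φ (a • m) = σ a • φ m)
    (hsurj : Set.range φ = Set.univ) :
    Nonempty (Module.Basis (Fin n) (fixedSubringP σ) (fixedSubmodule σ φ hadd hsmul)) ∧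
    (∃ eqv : (PowerSeries k ⊗[fixedSubringP σ] (fixedSubmodule σ φ hadd hsmul))
        ≃ₗ[PowerSeries k] M,
      ∀ (a : PowerSeries k) (m : fixedSubmodule σ φ hadd hsmul),
        eqv (a ⊗ₜ m) = a • (m : M)) ∧
    (∃ b : Module.Basis (Fin n) (PowerSeries k) M, ∀ i, φ (b i) = b i) := by
  have hq : 1 < p ^ e := Nat.one_lt_pow he.ne' (Fact.out : p.Prime).one_lt
  let σ₀ : k →+* k := PowerSeries.constantCoeff.comp ((σ : PowerSeries k →+* _).comp PowerSeries.C)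
  have hσ₀ : ∀ x, σ₀ x = x ^ p ^ e := fun x => by simpa [σ₀] using hσ (PowerSeries.C x) 0
  have hσσ₀ : ∀ f m, PowerSeries.coeff m (σ f) = σ₀ (PowerSeries.coeff m f) := fun f m => by
    rw [hσ, hσ₀]
  let φL : M →ₛₗ[(σ : PowerSeries k →+* PowerSeries k)] M :=
    { toFun := φ, map_add' := hadd, map_smul' := hsmul }
  obtain ⟨b, hb⟩ := bM.exists_basis_apply_eq_self_of_surjective hq hσ₀ hσσ₀ (φ := φL)
    (Set.range_eq_univ.mp hsurj)
  exact ⟨⟨fixedBasis φL hb⟩,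
    ⟨.ofBijective _ (bijective_liftBaseChange_subtype_fixedSubmodule φL hb),
      fun a m => LinearMap.liftBaseChange_tmul _ _ _ _⟩, b, hb⟩

open ExcDES in
theorem etale_fixed_points_free_and_basechange
    (p e : ℕ) [Fact p.Prime] (he : 0 < e)
    (k : Type*) [Field k] [IsAlgClosed k] [CharP k p]
    (σ : PowerSeries k ≃+* PowerSeries k)
    (hσ : ∀ (f : PowerSeries k) (n : ℕ),
      PowerSeries.coeff n (σ f) = PowerSeries.coeff n f ^ p ^ e)
    (M : Type*) [AddCommGroup M] [Module (PowerSeries k) M]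
    (n : ℕ) (bM : Module.Basis (Fin n) (PowerSeries k) M)
    (φ : M → M)
    (hadd : ∀ x y, φ (x + y) = φ x + φ y)
    (hsmul : ∀ (a : PowerSeries k) (m : M), φ (a • m) = σ a • φ m)
    (hinj : Function.Injective φ)
    (hsurj : Set.range φ = Set.univ) :
    Nonempty (Module.Basis (Fin n) (fixedSubringP σ) (fixedSubmodule σ φ hadd hsmul)) ∧
    (∃ eqv : (PowerSeries k ⊗[fixedSubringP σ] (fixedSubmodule σ φ hadd hsmul))
        ≃ₗ[PowerSeries k] M,
      ∀ (a : PowerSeries k) (m : fixedSubmodule σ φ hadd hsmul),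
        eqv (a ⊗ₜ m) = a • (m : M)) ∧
    (∃ b : Module.Basis (Fin n) (PowerSeries k) M, ∀ i, φ (b i) = b i) :=
  etale_fixed_points_free_and_basechange_general p e he k σ hσ M n bM φ hadd hsmul hsurj
end
end

section
/- Let (N, φ) be a Dieudonné K-module over k and let W ⊆ N be a 𝒦-subspace with φ(W) ⊆ W. Then there exists a 𝒦-subspace W′ ⊆ N with φ(W′) ⊆ W′ and N = W ⊕ W′. (In other words, the category of Dieudonné K-modules over k is semisimple.) -/
/-!
Since `φ` is injective and `φ W ⊆ W`, dimension count gives `φ W = W`. A `φ`-stable complement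
of `W` is the kernel of a projection `π` onto `W` commuting with `φ`, i.e. a fixed point of the
`σ`-semilinear map `ψ f = φ ∘ f ∘ φ⁻¹` on `End N`. The projections onto `W` form a coset
`π₀ + Hom(N ⧸ W, W)`, and `Hom(N ⧸ W, W)` is `ψ`-stable, so it suffices that `ψ - 1` is onto on
every `ψ`-stable subspace. For a vector `a` with `ψ^[n+1] a = ∑ i ≤ n, c i • ψ^[i] a`, solving
`ψ x - x = a` inside `span {ψ^[i] a}` comes down to one scalar equation
`∑ j ≤ n, σ^[j] (c (n - j)) * σ^[j+1] y - y = 1` in `k((π))`. Such `σ`-polynomial equations are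
solved by successive approximation: each new coefficient is a root of a nonzero additive
polynomial `∑ j, b j * t ^ q ^ j` over the algebraically closed field `k`.
-/

open Finset Polynomial

attribute [local instance] RingHomInvPair.of_ringEquiv RingHomInvPair.of_ringEquiv_symm

namespace HahnSeries

section Mul
variable {Γ R : Type*} [AddCommMonoid Γ] [LinearOrder Γ] [IsOrderedCancelAddMonoid Γ]
  [NonUnitalNonAssocSemiring R] {x y : HahnSeries Γ R} {m n : Γ}

theorem coeff_mul_eq_zero_of_lt_add (hx : ∀ r < m, x.coeff r = 0) (hy : ∀ s < n, y.coeff s = 0)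
    {d : Γ} (hd : d < m + n) : (x * y).coeff d = 0 := by
  rw [coeff_mul]
  refine sum_eq_zero fun ⟨r, s⟩ hrs => ?_
  obtain ⟨-, -, rfl⟩ := mem_antidiagonal.mp hrs
  rcases lt_or_ge r m with hr | hr
  · simp [hx r hr]
  · have hs : s < n := lt_of_not_ge fun hs => (add_le_add hr hs).not_gt hd
    simp [hy s hs]

theorem coeff_mul_add_of_forall_lt (hx : ∀ r < m, x.coeff r = 0) (hy : ∀ s < n, y.coeff s = 0) :
    (x * y).coeff (m + n) = x.coeff m * y.coeff n := by
  rw [coeff_mul]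
  refine sum_eq_single (m, n) (fun ⟨r, s⟩ hrs hne => ?_) fun hmn => ?_
  · obtain ⟨-, -, hsum⟩ := mem_antidiagonal.mp hrs
    rcases lt_or_ge r m with hr | hr
    · simp [hx r hr]
    rcases lt_or_ge s n with hs | hs
    · simp [hy s hs]
    obtain rfl : r = m :=
      le_antisymm (le_of_not_gt fun h => (add_lt_add_of_lt_of_le h hs).ne' hsum) hr
    obtain rfl : s = n := add_left_cancel hsum
    exact absurd rfl hne
  · simp only [Finset.mem_antidiagonal, mem_support, and_true, not_and_or, not_not] at hmn
    rcases hmn with h | h <;> simp [h]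

end Mul

theorem exists_min_order_of_ne_zero {Γ R ι : Type*} [LinearOrder Γ] [Zero Γ] [Zero R]
    {s : Finset ι} {B : ι → HahnSeries Γ R} (hB : ∃ j ∈ s, B j ≠ 0) :
    ∃ m, (∀ j ∈ s, ∀ r < m, (B j).coeff r = 0) ∧ ∃ j ∈ s, (B j).coeff m ≠ 0 := by
  classical
  have ht : (s.filter (B · ≠ 0)).Nonempty := by simpa [Finset.Nonempty] using hB
  obtain ⟨j₀, hj₀, hmin⟩ := exists_mem_eq_inf' ht fun j => (B j).order
  refine ⟨(B j₀).order, fun j hj r hr => ?_, j₀, (mem_filter.mp hj₀).1,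
    coeff_order_eq_zero.not.mpr (mem_filter.mp hj₀).2⟩
  by_cases hBj : B j = 0
  · simp [hBj]
  · rw [← hmin] at hr
    exact coeff_eq_zero_of_lt_order (hr.trans_le (inf'_le _ (mem_filter.mpr ⟨hj, hBj⟩)))

section Laurent
variable {R : Type*} [AddCommGroup R]

theorem exists_forall_coeff_eq_of_succ (Y : ℕ → HahnSeries ℤ R) (n₀ : ℤ)
    (h0 : ∀ d < n₀, (Y 0).coeff d = 0)
    (hY : ∀ i : ℕ, ∀ d < n₀ + i, (Y (i + 1)).coeff d = (Y i).coeff d) :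
    ∃ y : HahnSeries ℤ R, ∀ i : ℕ, ∀ d < n₀ + i, y.coeff d = (Y i).coeff d := by
  have hadd : ∀ i j : ℕ, ∀ d < n₀ + i, (Y (i + j)).coeff d = (Y i).coeff d := by
    intro i j d hd
    induction j with
    | zero => rfl
    | succ j ih => rw [← add_assoc, hY _ _ (by omega), ih]
  have hstable : ∀ i i' : ℕ, ∀ d < n₀ + i, d < n₀ + i' → (Y i).coeff d = (Y i').coeff d := by
    intro i i' d hd hd'
    rcases le_total i i' with h | h
    · obtain ⟨j, rfl⟩ := Nat.exists_eq_add_of_le h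
      exact (hadd i j d hd).symm
    · obtain ⟨j, rfl⟩ := Nat.exists_eq_add_of_le h
      exact hadd i' j d hd'
  let f : ℤ → R := fun d => (Y (d - n₀ + 1).toNat).coeff d
  have hf : ∀ d < n₀, f d = 0 := fun d hd => by
    rw [← h0 d hd]; exact hstable _ _ d (by omega) (by omega)
  refine ⟨ofSuppBddBelow f ⟨n₀, fun d hd => le_of_not_gt fun h => hd (hf d h)⟩,
    fun i d hd => hstable _ _ d (by omega) hd⟩

theorem surjective_of_leading_surjective (L : HahnSeries ℤ R →+ HahnSeries ℤ R) (m : ℤ) {P : R → R}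
    (hP : Function.Surjective P)
    (hL : ∀ n y, (∀ r < n, y.coeff r = 0) →
      (∀ d < m + n, (L y).coeff d = 0) ∧ (L y).coeff (m + n) = P (y.coeff n)) :
    Function.Surjective L := by
  intro u
  set n₀ := u.order - m
  -- `L (Y i) = u` holds below degree `m + n₀ + i`; each step fixes one more coefficient via `P`.
  let Y : ℕ → HahnSeries ℤ R := fun i => Nat.rec 0
    (fun i Yi => Yi + single (n₀ + i) (Function.surjInv hP ((u - L Yi).coeff (m + (n₀ + i))))) i
  have hsingle : ∀ i : ℕ, ∀ r < n₀ + i, (Y (i + 1) - Y i).coeff r = 0 := fun i r hr => by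
    simp [Y, hr.ne]
  have happrox : ∀ i : ℕ, ∀ d < m + (n₀ + i), (u - L (Y i)).coeff d = 0 := by
    intro i
    induction i with
    | zero =>
      intro d hd
      rw [show Y 0 = 0 from rfl, map_zero, sub_zero]
      exact coeff_eq_zero_of_lt_order (by omega)
    | succ i ih =>
      intro d hd
      obtain ⟨hlow, htop⟩ := hL _ _ (hsingle i)
      have hsplit : u - L (Y (i + 1)) = (u - L (Y i)) - L (Y (i + 1) - Y i) := by
        rw [map_sub]; abel
      rw [hsplit, coeff_sub]
      rcases lt_or_eq_of_le (show d ≤ m + (n₀ + i) by omega) with hd' | rfl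
      · rw [ih d hd', hlow d hd', sub_zero]
      · rw [htop]
        simp [Y, Function.surjInv_eq hP]
  obtain ⟨y, hy⟩ := exists_forall_coeff_eq_of_succ Y n₀ (fun d _ => by simp [Y])
    fun i d hd => by rw [← sub_eq_zero, ← coeff_sub, hsingle i d hd]
  refine ⟨y, HahnSeries.ext (funext fun d => ?_)⟩
  set i := (d - m - n₀ + 1).toNat
  have hyY : ∀ r < n₀ + i, (y - Y i).coeff r = 0 := fun r hr => by
    rw [coeff_sub, hy i r hr, sub_self]
  have hsplit : L y = L (y - Y i) - (u - L (Y i)) + u := by rw [map_sub]; abel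
  rw [hsplit, coeff_add, coeff_sub, (hL _ _ hyY).1 d (by omega), happrox i d (by omega),
    sub_zero, zero_add]

end Laurent

end HahnSeries

theorem IsAlgClosed.surjective_sum_mul_pow_pow {k : Type*} [Field k] [IsAlgClosed k] {q : ℕ}
    (hq : 1 < q) {s : Finset ℕ} {b : ℕ → k} (hb : ∃ j ∈ s, b j ≠ 0) :
    Function.Surjective fun t : k => ∑ j ∈ s, b j * t ^ q ^ j := by
  obtain ⟨j₀, hj₀, hbj₀⟩ := hb
  set P : k[X] := ∑ j ∈ s, C (b j) * X ^ q ^ j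
  have hcoeff : P.coeff (q ^ j₀) = b j₀ := by
    rw [finsetSum_coeff, sum_eq_single j₀ (fun j _ hj => ?_) (fun h => absurd hj₀ h)]
    · simp
    · rw [coeff_C_mul_X_pow, if_neg fun h => hj (Nat.pow_right_injective hq h).symm]
  have hdeg : P.natDegree ≠ 0 := by
    have := le_natDegree_of_ne_zero (hcoeff.trans_ne hbj₀)
    have := Nat.one_le_pow j₀ q (by omega)
    omega
  intro c
  obtain ⟨t, ht⟩ := IsAlgClosed.eval_surjective hdeg c
  exact ⟨t, by simpa [P, eval_finsetSum] using ht⟩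

theorem exists_iterate_succ_eq_sum_smul {R V : Type*} [Semiring R] [AddCommMonoid V] [Module R V]
    [IsNoetherian R V] (f : V → V) (a : V) :
    ∃ (n : ℕ) (c : ℕ → R), f^[n + 1] a = ∑ i ∈ range (n + 1), c i • f^[i] a := by
  let U : ℕ →o Submodule R V :=
    ⟨fun n => Submodule.span R (Set.range fun i : Fin n => f^[i] a), fun n n' h =>
      Submodule.span_mono fun _ ⟨i, hi⟩ => ⟨Fin.castLE h i, hi⟩⟩
  obtain ⟨n, hn⟩ := monotone_stabilizes_iff_noetherian.mpr ‹_› U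
  have hmem : f^[n + 1] a ∈ U (n + 1) := by
    rw [← hn (n + 1) (by omega), hn (n + 2) (by omega)]
    exact Submodule.subset_span ⟨Fin.last _, rfl⟩
  obtain ⟨c, hc⟩ := (Submodule.mem_span_range_iff_exists_fun R).mp hmem
  refine ⟨n, fun i => if h : i < n + 1 then c ⟨i, h⟩ else 0, ?_⟩
  rw [← hc, ← Fin.sum_univ_eq_sum_range]
  exact sum_congr rfl fun i _ => by simp [i.is_lt]

section Cyclic
variable {K V : Type*} [CommRing K] [AddCommGroup V] [Module K V] (σ : K →+* K)

/-- With `y = cyclicCoeff σ c y n`, these are the coordinates of a solution of `ψ x - x = a` on the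
family `ψ^[i] a`, when `ψ^[n+1] a = ∑ i ≤ n, c i • ψ^[i] a`. -/
def cyclicCoeff (c : ℕ → K) (y : K) (i : ℕ) : K :=
  ∑ j ∈ range (i + 1), (⇑σ)^[j] (c (i - j)) * (⇑σ)^[j + 1] y - 1

theorem cyclicCoeff_zero (c : ℕ → K) (y : K) : cyclicCoeff σ c y 0 = c 0 * σ y - 1 := by
  simp [cyclicCoeff]

theorem cyclicCoeff_succ (c : ℕ → K) (y : K) (i : ℕ) :
    cyclicCoeff σ c y (i + 1) = σ (cyclicCoeff σ c y i) + c (i + 1) * σ y := by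
  rw [cyclicCoeff, cyclicCoeff, sum_range_succ' _ (i + 1)]
  simp only [Function.iterate_succ_apply', Nat.add_sub_add_right, map_sub, map_sum, map_mul,
    map_one, Function.iterate_zero_apply, Nat.sub_zero]
  ring

theorem map_sum_cyclicCoeff_smul_sub (ψ : V →ₛₗ[σ] V) {a : V} {n : ℕ} {c : ℕ → K}
    (hψ : (⇑ψ)^[n + 1] a = ∑ i ∈ range (n + 1), c i • (⇑ψ)^[i] a) {y : K}
    (hy : cyclicCoeff σ c y n = y) :
    ψ (∑ i ∈ range (n + 1), cyclicCoeff σ c y i • (⇑ψ)^[i] a) -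
      ∑ i ∈ range (n + 1), cyclicCoeff σ c y i • (⇑ψ)^[i] a = a := by
  set X := cyclicCoeff σ c y
  have hX0 : X 0 = c 0 * σ y - 1 := cyclicCoeff_zero σ c y
  have hXsucc : ∀ i, X (i + 1) = σ (X i) + c (i + 1) * σ y := cyclicCoeff_succ σ c y
  have hψx : ψ (∑ i ∈ range (n + 1), X i • (⇑ψ)^[i] a) =
      ∑ i ∈ range n, (X (i + 1) - c (i + 1) * σ y) • (⇑ψ)^[i + 1] a +
        (∑ i ∈ range n, (c (i + 1) * σ y) • (⇑ψ)^[i + 1] a + (c 0 * σ y) • a) := by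
    rw [map_sum, sum_range_succ]
    simp only [map_smulₛₗ, ← Function.iterate_succ_apply' ψ, hy, hψ, smul_sum, smul_smul]
    rw [sum_range_succ' (fun i => (σ y * c i) • (⇑ψ)^[i] a)]
    congr 1
    · exact sum_congr rfl fun i _ => by rw [hXsucc, add_sub_cancel_right]
    · simp [mul_comm]
  rw [hψx, sum_range_succ', hX0]
  simp only [sub_smul, sum_sub_distrib, Function.iterate_zero_apply]
  module

end Cyclic

namespace LaurentSeries
variable {k : Type*} [Field k] {q : ℕ} {σ : LaurentSeries k →+* LaurentSeries k}

theorem coeff_iterate (hσ : ∀ x n, (σ x).coeff n = x.coeff n ^ q) (j : ℕ) (x : LaurentSeries k)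
    (n : ℤ) : ((⇑σ)^[j] x).coeff n = x.coeff n ^ q ^ j := by
  induction j with
  | zero => simp
  | succ j ih => rw [Function.iterate_succ_apply', hσ, ih, ← pow_mul, pow_succ]

theorem coeff_sum_mul_iterate (hq : 0 < q) (hσ : ∀ x n, (σ x).coeff n = x.coeff n ^ q)
    {s : Finset ℕ} {B : ℕ → LaurentSeries k} {m n : ℤ}
    (hB : ∀ j ∈ s, ∀ r < m, (B j).coeff r = 0) {y : LaurentSeries k}
    (hy : ∀ r < n, y.coeff r = 0) :
    (∀ d < m + n, (∑ j ∈ s, B j * (⇑σ)^[j] y).coeff d = 0) ∧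
      (∑ j ∈ s, B j * (⇑σ)^[j] y).coeff (m + n) = ∑ j ∈ s, (B j).coeff m * y.coeff n ^ q ^ j := by
  have hσy : ∀ j, ∀ r < n, ((⇑σ)^[j] y).coeff r = 0 := fun j r hr => by
    rw [coeff_iterate hσ, hy r hr, zero_pow (pow_pos hq j).ne']
  refine ⟨fun d hd => ?_, ?_⟩ <;> rw [HahnSeries.coeff_sum]
  · exact sum_eq_zero fun j hj => HahnSeries.coeff_mul_eq_zero_of_lt_add (hB j hj) (hσy j) hd
  · refine sum_congr rfl fun j hj => ?_
    rw [HahnSeries.coeff_mul_add_of_forall_lt (hB j hj) (hσy j), coeff_iterate hσ]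

theorem surjective_sum_mul_iterate [IsAlgClosed k] (hq : 1 < q)
    (hσ : ∀ x n, (σ x).coeff n = x.coeff n ^ q) {s : Finset ℕ} {B : ℕ → LaurentSeries k}
    (hB : ∃ j ∈ s, B j ≠ 0) : Function.Surjective fun y => ∑ j ∈ s, B j * (⇑σ)^[j] y := by
  obtain ⟨m, hm, hBm⟩ := HahnSeries.exists_min_order_of_ne_zero hB
  let L : LaurentSeries k →+ LaurentSeries k :=
    { toFun := fun y => ∑ j ∈ s, B j * (⇑σ)^[j] y
      map_zero' := by simp [iterate_map_zero]
      map_add' := fun x y => by simp [iterate_map_add, mul_add, sum_add_distrib] }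
  exact HahnSeries.surjective_of_leading_surjective L m
    (IsAlgClosed.surjective_sum_mul_pow_pow hq hBm)
    fun n y hy => coeff_sum_mul_iterate (by omega) hσ hm hy

theorem exists_cyclicCoeff_eq_self [IsAlgClosed k] (hq : 1 < q)
    (hσ : ∀ x n, (σ x).coeff n = x.coeff n ^ q) (c : ℕ → LaurentSeries k) (n : ℕ) :
    ∃ y, cyclicCoeff σ c y n = y := by
  -- `cyclicCoeff σ c y n - y + 1` is the `σ`-polynomial in `y` with coefficients `B`
  obtain ⟨y, hy⟩ := surjective_sum_mul_iterate hq hσ (s := range (n + 2))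
    (B := fun j => if j = 0 then -1 else (⇑σ)^[j - 1] (c (n - (j - 1))))
    ⟨0, by simp, by simp⟩ 1
  refine ⟨y, ?_⟩
  beta_reduce at hy
  rw [sum_range_succ'] at hy
  simp only [Nat.succ_ne_zero, if_false, if_true, Nat.add_sub_cancel] at hy
  rw [cyclicCoeff, ← hy]
  simp [Function.iterate_succ_apply']

theorem exists_mem_map_sub_self_eq [IsAlgClosed k] (hq : 1 < q)
    (hσ : ∀ x n, (σ x).coeff n = x.coeff n ^ q) {V : Type*} [AddCommGroup V]
    [Module (LaurentSeries k) V] [FiniteDimensional (LaurentSeries k) V] (ψ : V →ₛₗ[σ] V)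
    {U : Submodule (LaurentSeries k) V} (hU : ∀ u ∈ U, ψ u ∈ U) {a : V} (ha : a ∈ U) :
    ∃ x ∈ U, ψ x - x = a := by
  obtain ⟨n, c, hc⟩ := exists_iterate_succ_eq_sum_smul (R := LaurentSeries k) ψ a
  obtain ⟨y, hy⟩ := exists_cyclicCoeff_eq_self hq hσ c n
  have hiter : ∀ i, (⇑ψ)^[i] a ∈ U := fun i => by
    induction i with
    | zero => exact ha
    | succ i ih => rw [Function.iterate_succ_apply']; exact hU _ ih
  exact ⟨_, U.sum_mem fun i _ => U.smul_mem _ (hiter i), map_sum_cyclicCoeff_smul_sub σ ψ hc hy⟩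

end LaurentSeries

section Semisimple
variable {K : Type*} [Field K] {σ : K ≃+* K} {N : Type*} [AddCommGroup N] [Module K N]

namespace LinearEquiv

def conjEnd (Φ : N ≃ₛₗ[(σ : K →+* K)] N) :
    Module.End K N →ₛₗ[(σ : K →+* K)] Module.End K N where
  toFun f := (Φ : N →ₛₗ[(σ : K →+* K)] N).comp (f.comp (Φ.symm : N →ₛₗ[(σ.symm : K →+* K)] N))
  map_add' f g := by ext; simp
  map_smul' c f := by ext; simp [map_smulₛₗ]

@[simp]
theorem conjEnd_apply (Φ : N ≃ₛₗ[(σ : K →+* K)] N) (f : Module.End K N) (x : N) :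
    Φ.conjEnd f x = Φ (f (Φ.symm x)) := rfl

theorem map_eq_of_map_le [FiniteDimensional K N] (Φ : N ≃ₛₗ[(σ : K →+* K)] N)
    {W : Submodule K N} (hW : W.map (Φ : N →ₛₗ[(σ : K →+* K)] N) ≤ W) :
    W.map (Φ : N →ₛₗ[(σ : K →+* K)] N) = W := by
  refine Submodule.eq_of_le_of_finrank_le hW (le_of_eq ?_)
  have := rank_eq_of_equiv_equiv σ (Φ.submoduleMap W).toAddEquiv σ.bijective
    fun r m => by simp [map_smulₛₗ]
  simp [Module.finrank, this]

theorem symm_mem_of_map_eq (Φ : N ≃ₛₗ[(σ : K →+* K)] N) {W : Submodule K N}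
    (hW : W.map (Φ : N →ₛₗ[(σ : K →+* K)] N) = W) {w : N} (hw : w ∈ W) : Φ.symm w ∈ W := by
  rw [← hW] at hw
  obtain ⟨v, hv, rfl⟩ := hw
  simpa using hv

end LinearEquiv

/-- `Hom(N ⧸ W, W)`, seen inside `End N`; the projections onto `W` form a coset of it. -/
def Submodule.endsKillingInto (W : Submodule K N) : Submodule K (Module.End K N) where
  carrier := {f | (∀ x, f x ∈ W) ∧ ∀ w ∈ W, f w = 0}
  add_mem' hf hg :=
    ⟨fun x => W.add_mem (hf.1 x) (hg.1 x), fun w hw => by simp [hf.2 w hw, hg.2 w hw]⟩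
  zero_mem' := ⟨fun _ => W.zero_mem, fun _ _ => rfl⟩
  smul_mem' c f hf := ⟨fun x => W.smul_mem c (hf.1 x), fun w hw => by simp [hf.2 w hw]⟩

theorem Submodule.exists_isProj (W : Submodule K N) :
    ∃ π : Module.End K N, LinearMap.IsProj W π := by
  obtain ⟨C, hC⟩ := W.exists_isCompl
  exact ⟨W.projection C hC, Submodule.projection_apply_mem hC,
    fun _ => Submodule.projection_apply_of_mem_left hC⟩

namespace LinearMap.IsProj
variable {W : Submodule K N} {π π' : Module.End K N}

theorem sub_mem_endsKillingInto (hπ : IsProj W π) (hπ' : IsProj W π') :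
    π - π' ∈ W.endsKillingInto :=
  ⟨fun x => W.sub_mem (hπ.map_mem x) (hπ'.map_mem x),
    fun w hw => by simp [hπ.map_id w hw, hπ'.map_id w hw]⟩

theorem add_of_mem_endsKillingInto (hπ : IsProj W π) {f : Module.End K N}
    (hf : f ∈ W.endsKillingInto) : IsProj W (π + f) :=
  ⟨fun x => W.add_mem (hπ.map_mem x) (hf.1 x), fun w hw => by simp [hπ.map_id w hw, hf.2 w hw]⟩

theorem conjEnd (Φ : N ≃ₛₗ[(σ : K →+* K)] N) (hW : W.map (Φ : N →ₛₗ[(σ : K →+* K)] N) = W)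
    (hπ : IsProj W π) : IsProj W (Φ.conjEnd π) := by
  refine ⟨fun x => ?_, fun w hw => ?_⟩
  · rw [← hW]; exact ⟨_, hπ.map_mem _, rfl⟩
  · simp [hπ.map_id _ (Φ.symm_mem_of_map_eq hW hw)]

end LinearMap.IsProj

theorem LinearEquiv.conjEnd_mem_endsKillingInto (Φ : N ≃ₛₗ[(σ : K →+* K)] N)
    {W : Submodule K N}
    (hW : W.map (Φ : N →ₛₗ[(σ : K →+* K)] N) = W) {f : Module.End K N}
    (hf : f ∈ W.endsKillingInto) : Φ.conjEnd f ∈ W.endsKillingInto := by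
  refine ⟨fun x => ?_, fun w hw => ?_⟩
  · rw [← hW]; exact ⟨_, hf.1 _, rfl⟩
  · simp [hf.2 _ (Φ.symm_mem_of_map_eq hW hw)]

theorem LinearEquiv.map_mem_ker_of_conjEnd_eq (Φ : N ≃ₛₗ[(σ : K →+* K)] N)
    {π : Module.End K N} (hπ : Φ.conjEnd π = π) {x : N} (hx : x ∈ LinearMap.ker π) :
    Φ x ∈ LinearMap.ker π := by
  rw [LinearMap.mem_ker] at hx ⊢
  rw [← hπ, conjEnd_apply, symm_apply_apply, hx, map_zero]

theorem LinearEquiv.exists_invariant_isCompl [FiniteDimensional K N] (Φ : N ≃ₛₗ[(σ : K →+* K)] N)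
    {W : Submodule K N} (hW : ∀ w ∈ W, Φ w ∈ W)
    (h : ∀ U : Submodule K (Module.End K N), (∀ f ∈ U, Φ.conjEnd f ∈ U) →
      ∀ g ∈ U, ∃ f ∈ U, Φ.conjEnd f - f = g) :
    ∃ W' : Submodule K N, (∀ w ∈ W', Φ w ∈ W') ∧ IsCompl W W' := by
  have hWΦ := Φ.map_eq_of_map_le (Submodule.map_le_iff_le_comap.mpr hW)
  obtain ⟨π₀, hπ₀⟩ := W.exists_isProj
  obtain ⟨f, hf, hfπ₀⟩ := h _ (fun f => Φ.conjEnd_mem_endsKillingInto hWΦ) _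
    (hπ₀.sub_mem_endsKillingInto (hπ₀.conjEnd Φ hWΦ))
  have hπ : Φ.conjEnd (π₀ + f) = π₀ + f := by
    rw [map_add, sub_eq_iff_eq_add.mp hfπ₀]; abel
  exact ⟨LinearMap.ker (π₀ + f), fun x => Φ.map_mem_ker_of_conjEnd_eq hπ,
    (hπ₀.add_of_mem_endsKillingInto hf).isCompl⟩

end Semisimple

theorem dieudonne_semisimple_general
    (p e : ℕ) [Fact p.Prime] (he : 0 < e)
    (k : Type*) [Field k] [IsAlgClosed k]
    (σ : LaurentSeries k ≃+* LaurentSeries k)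
    (hσ : ∀ (x : LaurentSeries k) (n : ℤ), (σ x).coeff n = x.coeff n ^ p ^ e)
    (N : Type*) [AddCommGroup N] [Module (LaurentSeries k) N]
    [FiniteDimensional (LaurentSeries k) N]
    (φ : N → N)
    (hadd : ∀ x y, φ (x + y) = φ x + φ y)
    (hsmul : ∀ (a : LaurentSeries k) (v : N), φ (a • v) = σ a • φ v)
    (hbij : Function.Bijective φ)
    (W : Submodule (LaurentSeries k) N) (hW : ∀ w ∈ W, φ w ∈ W) :
    ∃ W' : Submodule (LaurentSeries k) N, (∀ w ∈ W', φ w ∈ W') ∧ IsCompl W W' := by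
  have hq : 1 < p ^ e := Nat.one_lt_pow he.ne' (Fact.out : p.Prime).one_lt
  let Φ : N ≃ₛₗ[(σ : LaurentSeries k →+* LaurentSeries k)] N :=
    .ofBijective ⟨⟨φ, hadd⟩, hsmul⟩ hbij
  exact Φ.exists_invariant_isCompl hW fun U hU g hg =>
    LaurentSeries.exists_mem_map_sub_self_eq hq hσ Φ.conjEnd hU hg

theorem dieudonne_semisimple
    (p e : ℕ) [Fact p.Prime] (he : 0 < e)
    (k : Type*) [Field k] [IsAlgClosed k] [CharP k p]
    (σ : LaurentSeries k ≃+* LaurentSeries k)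
    (hσ : ∀ (x : LaurentSeries k) (n : ℤ), (σ x).coeff n = x.coeff n ^ p ^ e)
    (N : Type*) [AddCommGroup N] [Module (LaurentSeries k) N]
    [FiniteDimensional (LaurentSeries k) N]
    (φ : N → N)
    (hadd : ∀ x y, φ (x + y) = φ x + φ y)
    (hsmul : ∀ (a : LaurentSeries k) (v : N), φ (a • v) = σ a • φ v)
    (hbij : Function.Bijective φ)
    (W : Submodule (LaurentSeries k) N) (hW : ∀ w ∈ W, φ w ∈ W) :
    ∃ W' : Submodule (LaurentSeries k) N, (∀ w ∈ W', φ w ∈ W') ∧ IsCompl W W' :=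
  dieudonne_semisimple_general p e he k σ hσ N φ hadd hsmul hbij W hW
end

section
/- For coprime integers r ≥ 1 and s, the Dieudonné K-module (N_{r,s}, φ_{r,s}) is simple: the only 𝒦-subspaces W ⊆ 𝒦^r with φ_{r,s}(W) ⊆ W are W = 0 and W = 𝒦^r. -/
/- STATEMENT 2: For coprime integers r ≥ 1 and s, the Dieudonné K-module (N_{r,s}, φ_{r,s})
is simple: the only 𝒦-subspaces W ⊆ 𝒦^r with φ_{r,s}(W) ⊆ W are W = 0 and W = 𝒦^r. -/

noncomputable section

set_option maxHeartbeats 1000000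
set_option synthInstance.maxHeartbeats 1000000

/-- The uniformizer `π` of `k⟦π⟧`, viewed inside the Laurent series field `𝒦 = k⸨π⸩`. -/
def piL (k : Type*) [Field k] : LaurentSeries k := HahnSeries.single (1 : ℤ) (1 : k)

/-- The `σ`-semilinear map `φ_{r,s}` on `𝒦^r`, given by
`φ_{r,s}(a₀, …, a_{r-1}) = (π^s · σ(a_{r-1}), σ(a₀), …, σ(a_{r-2}))`. -/
def phiRS {k : Type*} [Field k] (σ : LaurentSeries k ≃+* LaurentSeries k) (r : ℕ) (s : ℤ)
    (a : Fin r → LaurentSeries k) : Fin r → LaurentSeries k := fun i =>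
  if _h : (i : ℕ) = 0 then piL k ^ s * σ (a ⟨r - 1, by have := i.isLt; omega⟩)
  else σ (a ⟨(i : ℕ) - 1, by have := i.isLt; omega⟩)


/-!
Suppose `W` is a `φ`-stable subspace of dimension `d` with `0 < d < r`, and let `c` be the matrix
of `φ` on a basis of `W`. Since `φ` is `σ`-semilinear, the matrix of `φʳ` on that basis is the
twisted product `σ^{r-1}(c) ⋯ σ(c) c`, whose determinant has order `r · ord (det c)`. On the other
hand `φʳ = πˢ σʳ` coordinatewise; reading this through an invertible `d × d` minor of the basis
matrix, the determinant of `φʳ` on `W` also has order `d s`. Hence `r ∣ d s`, so `r ∣ d` by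
coprimality, which is impossible.
-/

open Module Finset

namespace Matrix

variable {F : Type*} [Field F]

theorem exists_submatrix_det_ne_zero {d m : ℕ} {M : Matrix (Fin d) (Fin m) F}
    (hM : LinearIndependent F M.row) : ∃ I : Fin d → Fin m, (M.submatrix id I).det ≠ 0 := by
  have hcols : Submodule.span F (Set.range M.col) = ⊤ := by
    apply Submodule.eq_top_of_finrank_eq
    rw [← rank_eq_finrank_span_cols, hM.rank_matrix, finrank_fin_fun, Fintype.card_fin]
  obtain ⟨κ, a, -, hspan, hli⟩ := exists_linearIndependent' F M.col
  let B : Basis κ F (Fin d → F) := Basis.mk hli (by rw [hspan, hcols])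
  let e : Fin d ≃ κ := (Pi.basisFun F (Fin d)).indexEquiv B
  refine ⟨a ∘ e, ((isUnit_iff_isUnit_det _).mp ?_).ne_zero⟩
  exact linearIndependent_cols_iff_isUnit.mp (hli.comp e e.injective)

variable {ι : Type*} [Fintype ι] [DecidableEq ι]

/-- If `c` is the matrix of a `σ`-semilinear map `f` (the `j`-th row holding the coordinates of the
image of the `j`-th vector), then `twistedPow σ c t` is the matrix of `f^[t]`. -/
def twistedPow (σ : F ≃+* F) (c : Matrix ι ι F) : ℕ → Matrix ι ι F
  | 0 => 1
  | t + 1 => (twistedPow σ c t).map σ * c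

theorem det_twistedPow (σ : F ≃+* F) (c : Matrix ι ι F) (t : ℕ) :
    (twistedPow σ c t).det = ∏ i ∈ range t, σ^[i] c.det := by
  induction t with
  | zero => simp [twistedPow]
  | succ t ih =>
    rw [twistedPow, det_mul, ← RingEquiv.mapMatrix_apply, ← RingEquiv.map_det, ih, map_prod,
      prod_range_succ']
    simp only [← Function.iterate_succ_apply' σ, Function.iterate_zero, id_eq]

end Matrix

section Semilinear

open Matrix

variable {F : Type*} [Field F] {σ : F ≃+* F}

theorem iterate_apply_eq_sum_twistedPow {V : Type*} [AddCommGroup V] [Module F V]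
    {ι : Type*} [Fintype ι] [DecidableEq ι] (f : V →ₛₗ[(σ : F →+* F)] V) {w : ι → V}
    {c : Matrix ι ι F} (hc : ∀ j, f (w j) = ∑ l, c j l • w l) (t : ℕ) (j : ι) :
    f^[t] (w j) = ∑ l, twistedPow σ c t j l • w l := by
  induction t generalizing j with
  | zero => simp [twistedPow, one_apply, ite_smul]
  | succ t ih =>
    simp only [Function.iterate_succ_apply', ih, map_sum, map_smulₛₗ, hc, smul_sum, smul_smul,
      twistedPow, mul_apply, sum_smul, map_apply, RingEquiv.coe_toRingHom]
    exact sum_comm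

/-- With `A` an invertible minor of the matrix whose rows form a basis of `W` and `C` the matrix
of `f^[r]` on that basis, the hypothesis `hf` says `π • τ A = C * A`; take determinants. -/
theorem exists_pow_finrank_mul_eq_prod_iterate_mul {n : ℕ}
    (f : (Fin n → F) →ₛₗ[(σ : F →+* F)] (Fin n → F)) (W : Submodule F (Fin n → F))
    (hW : ∀ a ∈ W, f a ∈ W) {r : ℕ} {π : F} {τ : F →+* F}
    (hf : ∀ a i, f^[r] a i = π * τ (a i)) :
    ∃ a b : F, a ≠ 0 ∧ π ^ finrank F W * τ a = (∏ i ∈ range r, σ^[i] b) * a := by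
  let B := Module.finBasis F W
  let M : Matrix (Fin (finrank F W)) (Fin n) F := of fun j => B j
  obtain ⟨c, hc⟩ : ∃ c : Matrix (Fin (finrank F W)) (Fin (finrank F W)) F,
      ∀ j, f (M j) = ∑ l, c j l • M l := by
    refine ⟨of fun j => B.repr ⟨f (M j), hW _ (B j).2⟩, fun j => ?_⟩
    have h := congrArg Subtype.val (B.sum_repr ⟨f (M j), hW _ (B j).2⟩)
    simp only [Submodule.coe_sum, Submodule.coe_smul] at h
    exact h.symm
  obtain ⟨I, hI⟩ := exists_submatrix_det_ne_zero (M := M)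
    (B.linearIndependent.map' W.subtype W.ker_subtype)
  set A := M.submatrix id I
  have hA : π • A.map τ = twistedPow σ c r * A := by
    ext j i
    simp [A, mul_apply, ← hf, iterate_apply_eq_sum_twistedPow f hc]
  refine ⟨A.det, c.det, hI, ?_⟩
  have hdet := congrArg det hA
  rwa [det_smul, ← RingHom.mapMatrix_apply, ← RingHom.map_det, det_mul, det_twistedPow,
    Fintype.card_fin] at hdet

end Semilinear

namespace LaurentSeries

variable {k : Type*} [Field k] {q : ℕ} {σ : LaurentSeries k ≃+* LaurentSeries k}

theorem exponent_ne_zero (hσ : ∀ (x : LaurentSeries k) (n : ℤ), (σ x).coeff n = x.coeff n ^ q) :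
    q ≠ 0 := by
  rintro rfl
  simpa using hσ 0 0

theorem piL_zpow (s : ℤ) : piL k ^ s = HahnSeries.single s 1 :=
  (RatFunc.single_zpow s).symm

theorem order_piL_zpow (s : ℤ) : (piL k ^ s).order = s := by
  rw [piL_zpow, HahnSeries.order_single one_ne_zero]

variable (hσ : ∀ (x : LaurentSeries k) (n : ℤ), (σ x).coeff n = x.coeff n ^ q)
include hσ

theorem map_piL_zpow (s : ℤ) : σ (piL k ^ s) = piL k ^ s := by
  ext n
  rw [hσ, piL_zpow, HahnSeries.coeff_single]
  split_ifs <;> simp [exponent_ne_zero hσ]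

theorem order_map (x : LaurentSeries k) : (σ x).order = x.order := by
  have hcoeff (n : ℤ) : (σ x).coeff n = 0 ↔ x.coeff n = 0 := by
    rw [hσ, pow_eq_zero_iff (exponent_ne_zero hσ)]
  by_cases hx : x = 0
  · simp [hx]
  have hσx : σ x ≠ 0 := (map_ne_zero σ).mpr hx
  refine le_antisymm (HahnSeries.order_le_of_coeff_ne_zero ?_)
    (HahnSeries.order_le_of_coeff_ne_zero ?_)
  · exact (hcoeff _).not.mpr (HahnSeries.coeff_order_eq_zero.not.mpr hx)
  · exact (hcoeff _).not.mp (HahnSeries.coeff_order_eq_zero.not.mpr hσx)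

theorem order_iterate_map (t : ℕ) (x : LaurentSeries k) : (σ^[t] x).order = x.order := by
  induction t with
  | zero => rfl
  | succ t ih => rw [Function.iterate_succ_apply', order_map hσ, ih]

theorem order_prod_iterate_map {b : LaurentSeries k} (hb : b ≠ 0) (t : ℕ) :
    (∏ i ∈ range t, σ^[i] b).order = t * b.order := by
  have hne (i : ℕ) : σ^[i] b ≠ 0 := by simpa using (σ.injective.iterate i).ne hb
  induction t with
  | zero => simp
  | succ t ih =>
    rw [prod_range_succ, HahnSeries.order_mul (prod_ne_zero_iff.mpr fun i _ => hne i) (hne t), ih,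
      order_iterate_map hσ]
    push_cast
    ring

theorem natCast_mul_eq_mul_order {d r : ℕ} (hr : 0 < r) {s : ℤ} {a b : LaurentSeries k}
    (ha : a ≠ 0) (h : (piL k ^ s) ^ d * σ^[r] a = (∏ i ∈ range r, σ^[i] b) * a) :
    (d : ℤ) * s = r * b.order := by
  have hπ : piL k ^ s ≠ 0 := zpow_ne_zero s (HahnSeries.single_ne_zero one_ne_zero)
  have hσa : σ^[r] a ≠ 0 := by simpa using (σ.injective.iterate r).ne ha
  have hprod : ∏ i ∈ range r, σ^[i] b ≠ 0 :=
    left_ne_zero_of_mul (h ▸ mul_ne_zero (pow_ne_zero d hπ) hσa)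
  have hb : b ≠ 0 := by simpa using prod_ne_zero_iff.mp hprod 0 (mem_range.mpr hr)
  have horder := congrArg HahnSeries.order h
  rw [HahnSeries.order_mul (pow_ne_zero d hπ) hσa, HahnSeries.order_mul hprod ha,
    HahnSeries.order_pow, order_piL_zpow, order_iterate_map hσ, order_prod_iterate_map hσ hb,
    nsmul_eq_mul] at horder
  linarith

end LaurentSeries

section phiRS

variable {k : Type*} [Field k] {σ : LaurentSeries k ≃+* LaurentSeries k} {r : ℕ} {s : ℤ}

variable (σ r s) in
def phiRSₛₗ : (Fin r → LaurentSeries k) →ₛₗ[(σ : LaurentSeries k →+* LaurentSeries k)]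
    (Fin r → LaurentSeries k) where
  toFun := phiRS σ r s
  map_add' a b := by
    ext i
    simp only [phiRS, Pi.add_apply]
    split_ifs <;> simp [mul_add]
  map_smul' x a := by
    ext i
    simp only [phiRS, Pi.smul_apply, smul_eq_mul]
    split_ifs <;> simp [mul_left_comm]

theorem iterate_phiRS_apply (hπ : σ (piL k ^ s) = piL k ^ s) {t : ℕ} (ht : t ≤ r)
    (a : Fin r → LaurentSeries k) (i : Fin r) :
    (phiRS σ r s)^[t] a i =
      if h : (i : ℕ) < t then piL k ^ s * σ^[t] (a ⟨i + (r - t), by omega⟩)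
      else σ^[t] (a ⟨i - t, by omega⟩) := by
  induction t generalizing i with
  | zero => simp
  | succ t ih =>
    have hσt (x) : σ (σ^[t] x) = σ^[t + 1] x := (Function.iterate_succ_apply' σ t x).symm
    rw [Function.iterate_succ_apply']
    by_cases h0 : (i : ℕ) = 0
    · rw [phiRS, dif_pos h0, ih (by omega), dif_neg (by dsimp only; omega), dif_pos (by omega), hσt]
      congr 3
      simp only [Fin.mk.injEq]
      omega
    by_cases h1 : (i : ℕ) - 1 < t
    · rw [phiRS, dif_neg h0, ih (by omega), dif_pos h1, dif_pos (by omega), map_mul, hπ, hσt]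
      congr 3
      simp only [Fin.mk.injEq]
      omega
    · rw [phiRS, dif_neg h0, ih (by omega), dif_neg h1, dif_neg (by omega), hσt]
      congr 2
      simp only [Fin.mk.injEq]
      omega

theorem iterate_phiRS_self (hπ : σ (piL k ^ s) = piL k ^ s) (a : Fin r → LaurentSeries k)
    (i : Fin r) : (phiRS σ r s)^[r] a i = piL k ^ s * σ^[r] (a i) := by
  simp [iterate_phiRS_apply hπ le_rfl]

end phiRS

open LaurentSeries in
theorem simple_NRS_general
    (p e : ℕ)
    (k : Type*) [Field k]
    (σ : LaurentSeries k ≃+* LaurentSeries k)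
    (hσ : ∀ (x : LaurentSeries k) (n : ℤ), (σ x).coeff n = x.coeff n ^ p ^ e)
    (r : ℕ) (s : ℤ) (hrs : Int.gcd (r : ℤ) s = 1)
    (W : Submodule (LaurentSeries k) (Fin r → LaurentSeries k))
    (hW : ∀ a ∈ W, phiRS σ r s a ∈ W) :
    W = ⊥ ∨ W = ⊤ := by
  by_contra! ⟨hbot, htop⟩
  set d := finrank (LaurentSeries k) W
  have hd : 0 < d := Submodule.one_le_finrank_iff.mpr hbot
  have hdr : d < r := by simpa using Submodule.finrank_lt htop
  obtain ⟨a, b, ha, hab⟩ := exists_pow_finrank_mul_eq_prod_iterate_mul (phiRSₛₗ σ r s) W hW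
    (τ := (σ : LaurentSeries k →+* LaurentSeries k) ^ r)
    (fun a i => by rw [RingHom.coe_pow]; exact iterate_phiRS_self (map_piL_zpow hσ s) a i)
  rw [RingHom.coe_pow, RingEquiv.coe_toRingHom] at hab
  have hdvd : (r : ℤ) ∣ d * s := ⟨b.order, natCast_mul_eq_mul_order hσ (by omega) ha hab⟩
  have hrd := (Int.isCoprime_iff_gcd_eq_one.mpr hrs).dvd_of_dvd_mul_right hdvd
  have hle := Int.le_of_dvd (by omega) hrd
  omega

theorem simple_NRS
    (p e : ℕ) [Fact p.Prime] (he : 0 < e)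
    (k : Type*) [Field k] [IsAlgClosed k] [CharP k p]
    (σ : LaurentSeries k ≃+* LaurentSeries k)
    (hσ : ∀ (x : LaurentSeries k) (n : ℤ), (σ x).coeff n = x.coeff n ^ p ^ e)
    (r : ℕ) (hr : 1 ≤ r) (s : ℤ) (hrs : Int.gcd (r : ℤ) s = 1)
    (W : Submodule (LaurentSeries k) (Fin r → LaurentSeries k))
    (hW : ∀ a ∈ W, phiRS σ r s a ∈ W) :
    W = ⊥ ∨ W = ⊤ :=
  simple_NRS_general p e k σ hσ r s hrs W hW
end
end

section
/- Let (r, s) and (r′, s′) be two pairs of integers with r, r′ ≥ 1, gcd(r,s) = gcd(r′,s′) = 1 and (r, s) ≠ (r′, s′). Then the Dieudonné K-modules N_{r,s} and N_{r′,s′} are not isomorphic: there is no bijective 𝒦-linear map α : 𝒦^r → 𝒦^{r′} with α ∘ φ_{r,s} = φ_{r′,s′} ∘ α. -/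
noncomputable section

set_option maxHeartbeats 1000000
set_option synthInstance.maxHeartbeats 1000000

/-! The `r`-th iterate of `φ_{r,s}` acts on every coordinate as `π^s σ^r`, and `σ` preserves the
`π`-adic order. An isomorphism `α` forces `r = r'`, and then a nonzero coordinate `x` of
`α (1, …, 1)` satisfies `π^s x = π^{s'} σ^r x`; comparing orders gives `s = s'`. -/

theorem HahnSeries.order_eq_of_coeff_eq_zero_iff {Γ R : Type*} [Zero Γ] [LinearOrder Γ] [Zero R]
    {x y : HahnSeries Γ R} (h : ∀ g, x.coeff g = 0 ↔ y.coeff g = 0) : x.order = y.order := by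
  by_cases hx : x = 0
  · have hy : y = 0 := by ext g; simp [← h g, hx]
    simp [hx, hy]
  have hy : y ≠ 0 := fun hy ↦ hx (by ext g; simp [h g, hy])
  exact le_antisymm
    (order_le_of_coeff_ne_zero (by rw [Ne, h]; exact coeff_order_eq_zero.not.mpr hy))
    (order_le_of_coeff_ne_zero (by rw [Ne, ← h]; exact coeff_order_eq_zero.not.mpr hx))

section LaurentSeries

variable {k : Type*} [Field k]

theorem piL_zpow (s : ℤ) : piL k ^ s = HahnSeries.single s 1 :=
  (RatFunc.single_zpow s).symm

theorem order_piL_zpow_mul (s : ℤ) {x : LaurentSeries k} (hx : x ≠ 0) :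
    (piL k ^ s * x).order = s + x.order := by
  rw [piL_zpow, HahnSeries.order_mul (by simp) hx, HahnSeries.order_single one_ne_zero]

section CoeffPow

variable {σ : LaurentSeries k ≃+* LaurentSeries k} {Q : ℕ}

theorem exponent_ne_zero_of_coeff_map (hσ : ∀ x n, (σ x).coeff n = x.coeff n ^ Q) : Q ≠ 0 := by
  rintro rfl
  simpa using hσ 0 0

theorem map_piL_of_coeff_map (hσ : ∀ x n, (σ x).coeff n = x.coeff n ^ Q) :
    σ (piL k) = piL k := by
  ext n
  rw [hσ, piL, HahnSeries.coeff_single]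
  split_ifs <;> simp [exponent_ne_zero_of_coeff_map hσ]

theorem coeff_iterate_map (hσ : ∀ x n, (σ x).coeff n = x.coeff n ^ Q) (m : ℕ)
    (x : LaurentSeries k) (n : ℤ) : (σ^[m] x).coeff n = x.coeff n ^ Q ^ m := by
  induction m with
  | zero => simp
  | succ m ih => rw [Function.iterate_succ_apply', hσ, ih, ← pow_mul, ← pow_succ]

theorem order_iterate_map (hσ : ∀ x n, (σ x).coeff n = x.coeff n ^ Q) (m : ℕ)
    (x : LaurentSeries k) : (σ^[m] x).order = x.order := by
  refine HahnSeries.order_eq_of_coeff_eq_zero_iff fun n ↦ ?_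
  rw [coeff_iterate_map hσ, pow_eq_zero_iff (pow_ne_zero m (exponent_ne_zero_of_coeff_map hσ))]

end CoeffPow

section Phi

variable {σ : LaurentSeries k ≃+* LaurentSeries k} {r : ℕ} (s : ℤ) (v : Fin r → LaurentSeries k)

theorem phiRS_apply_zero (h : 0 < r) :
    phiRS σ r s v ⟨0, h⟩ = piL k ^ s * σ (v ⟨r - 1, by omega⟩) := rfl

theorem phiRS_apply_succ {j : ℕ} (h : j + 1 < r) :
    phiRS σ r s v ⟨j + 1, h⟩ = σ (v ⟨j, by omega⟩) := rfl

theorem phiRS_iterate_apply (hσπ : σ (piL k) = piL k) {n : ℕ} (hn : n ≤ r) (j : ℕ) (hj : j < r) :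
    (phiRS σ r s)^[n] v ⟨j, hj⟩ =
      if _ : j < n then piL k ^ s * σ^[n] (v ⟨j + r - n, by omega⟩)
      else σ^[n] (v ⟨j - n, by omega⟩) := by
  induction n generalizing j with
  | zero => simp
  | succ n ih =>
    rw [Function.iterate_succ_apply']
    rcases j with _ | j
    · rw [phiRS_apply_zero, ih (by omega), dif_neg (by omega), dif_pos (by omega),
        ← Function.iterate_succ_apply' σ]
      congr 4
      omega
    · rw [phiRS_apply_succ, ih (by omega)]
      split_ifs
      · rw [map_mul, map_zpow₀, hσπ, ← Function.iterate_succ_apply' σ]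
        congr 4
        omega
      · omega
      · omega
      · rw [← Function.iterate_succ_apply' σ]
        congr 3
        omega

theorem phiRS_iterate_self_apply (hσπ : σ (piL k) = piL k) (i : Fin r) :
    (phiRS σ r s)^[r] v i = piL k ^ s * σ^[r] (v i) := by
  rw [phiRS_iterate_apply s v hσπ le_rfl i i.isLt, dif_pos i.isLt]
  simp

end Phi

theorem eq_of_semiconj_phiRS {σ : LaurentSeries k ≃+* LaurentSeries k} {Q : ℕ}
    (hσ : ∀ x n, (σ x).coeff n = x.coeff n ^ Q) {r : ℕ} (hr : 0 < r) {s s' : ℤ}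
    (α : (Fin r → LaurentSeries k) →ₗ[LaurentSeries k] (Fin r → LaurentSeries k))
    (hα : Function.Injective α) (hαφ : Function.Semiconj α (phiRS σ r s) (phiRS σ r s')) :
    s = s' := by
  have hσπ := map_piL_of_coeff_map hσ
  have : Nonempty (Fin r) := ⟨⟨0, hr⟩⟩
  have hφ_one : (phiRS σ r s)^[r] 1 = piL k ^ s • 1 := by
    ext i
    simp [phiRS_iterate_self_apply s _ hσπ, iterate_map_one]
  obtain ⟨i, hi⟩ : ∃ i, α 1 i ≠ 0 := by
    by_contra! h
    exact one_ne_zero (hα (by rw [map_zero]; exact funext h))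
  have hσi : σ^[r] (α 1 i) ≠ 0 := by
    rw [← iterate_map_zero σ r]
    exact (σ.injective.iterate r).ne hi
  have key : piL k ^ s * α 1 i = piL k ^ s' * σ^[r] (α 1 i) := by
    have := congrFun (hαφ.iterate_right r 1) i
    rwa [hφ_one, map_smul, phiRS_iterate_self_apply s' _ hσπ] at this
  have horder := congrArg HahnSeries.order key
  rw [order_piL_zpow_mul s hi, order_piL_zpow_mul s' hσi, order_iterate_map hσ] at horder
  omega

end LaurentSeries

theorem NRS_pairwise_nonisomorphic_general
    (p e : ℕ)
    (k : Type*) [Field k]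
    (σ : LaurentSeries k ≃+* LaurentSeries k)
    (hσ : ∀ (x : LaurentSeries k) (n : ℤ), (σ x).coeff n = x.coeff n ^ p ^ e)
    (r r' : ℕ) (hr : 1 ≤ r) (s s' : ℤ)
    (hne : (r, s) ≠ (r', s')) :
    ¬ ∃ α : (Fin r → LaurentSeries k) ≃ₗ[LaurentSeries k] (Fin r' → LaurentSeries k),
        ∀ a, α (phiRS σ r s a) = phiRS σ r' s' (α a) := by
  rintro ⟨α, hα⟩
  obtain rfl : r = r' := by simpa using α.finrank_eq
  exact hne (congrArg (Prod.mk r) (eq_of_semiconj_phiRS hσ hr α.toLinearMap α.injective hα))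

theorem NRS_pairwise_nonisomorphic
    (p e : ℕ) [Fact p.Prime] (he : 0 < e)
    (k : Type*) [Field k] [IsAlgClosed k] [CharP k p]
    (σ : LaurentSeries k ≃+* LaurentSeries k)
    (hσ : ∀ (x : LaurentSeries k) (n : ℤ), (σ x).coeff n = x.coeff n ^ p ^ e)
    (r r' : ℕ) (hr : 1 ≤ r) (hr' : 1 ≤ r') (s s' : ℤ)
    (hrs : Int.gcd (r : ℤ) s = 1) (hrs' : Int.gcd (r' : ℤ) s' = 1)
    (hne : (r, s) ≠ (r', s')) :
    ¬ ∃ α : (Fin r → LaurentSeries k) ≃ₗ[LaurentSeries k] (Fin r' → LaurentSeries k),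
        ∀ a, α (phiRS σ r s a) = phiRS σ r' s' (α a) :=
  NRS_pairwise_nonisomorphic_general p e k σ hσ r r' hr s s' hne
end
end
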